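/- (Corollary 3.6: recovering the values of a balanced function.) Let n ≥ 1 and let f : 𝔽₂ⁿ → 𝔽₂ᵐ be balanced: there are f₁, f₂ ∈ 𝔽₂ᵐ with f₁ ≠ f₂ such that f takes only the values f₁ and f₂, each on exactly 2^(n−1) inputs. Define λ ∈ 𝔽₂ᵐ by λᵢ = 1 if Σ_{x ∈ 𝔽₂ⁿ} (−1)^(f(x)·e_i) = 0 and λᵢ = 0 otherwise. Then λ = f₁ ⊕ f₂, and consequently the two values of f are f(0) and f(0) ⊕ λ, i.e. {f₁, f₂} = {f(0), f(0) ⊕ λ}. -/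

import Mathlib

/-!
Since `f(x)·e_i = f(x)_i`, splitting `Σ_x (−1)^(f(x)·e_i)` along the two fibres of `f` gives
`2^(n−1) ((−1)^(f₁)_i + (−1)^(f₂)_i)`, which vanishes exactly when `(f₁)_i ≠ (f₂)_i`, i.e. when
`(f₁ ⊕ f₂)_i = 1`. As `f(0)` is one of the two values, the other one is `f(0) ⊕ f₁ ⊕ f₂` in
characteristic two.
-/

/-- The sign `(−1)^a ∈ ℂ` associated to a bit `a ∈ 𝔽₂`. -/
noncomputable def sgn (a : ZMod 2) : ℂ := (-1 : ℂ) ^ a.val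

/-- The pairing `x·z = Σᵢ xᵢ·zᵢ ∈ 𝔽₂` of two binary strings. -/
def dotp {k : ℕ} (x z : Fin k → ZMod 2) : ZMod 2 := ∑ i, x i * z i

/-- The `i`-th standard basis vector of `𝔽₂ᵏ`. -/
def stdBasis {k : ℕ} (i : Fin k) : Fin k → ZMod 2 :=
  fun j => if j = i then 1 else 0

lemma dotp_stdBasis {k : ℕ} (v : Fin k → ZMod 2) (i : Fin k) :
    dotp v (stdBasis i) = v i := by
  simp [dotp, stdBasis, mul_ite]

lemma sgn_add_sgn_eq_zero_iff (a b : ZMod 2) : sgn a + sgn b = 0 ↔ a + b = 1 := by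
  fin_cases a <;> fin_cases b <;> norm_num [sgn, ZMod.val] <;> decide

lemma ZMod.two_ite_eq_one (a : ZMod 2) : (if a = 1 then 1 else 0) = a := by
  revert a; decide

open Finset in
lemma Fintype.sum_comp_eq_of_two_valued {α β M : Type*} [Fintype α] [DecidableEq β]
    [AddCommMonoid M] (g : α → β) (φ : β → M) {b₁ b₂ : β} (hne : b₁ ≠ b₂)
    (hg : ∀ x, g x = b₁ ∨ g x = b₂) :
    ∑ x, φ (g x) = #{x | g x = b₁} • φ b₁ + #{x | g x = b₂} • φ b₂ := by
  have hcompl : ({x | ¬g x = b₁} : Finset α) = ({x | g x = b₂} : Finset α) :=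
    filter_congr fun x _ => by rcases hg x with h | h <;> simp [h, hne, hne.symm]
  rw [← sum_filter_add_sum_filter_not univ (g · = b₁), hcompl,
    sum_eq_card_nsmul fun x hx => by rw [(mem_filter.mp hx).2],
    sum_eq_card_nsmul fun x hx => by rw [(mem_filter.mp hx).2]]

lemma Set.pair_eq_pair_add_add {G : Type*} [AddCommGroup G] [Module (ZMod 2) G] {a b c : G}
    (hc : c = a ∨ c = b) : ({a, b} : Set G) = {c, c + (a + b)} := by
  rcases hc with rfl | rfl
  · rw [← add_assoc, ZModModule.add_self, zero_add]
  · rw [add_comm a, ← add_assoc, ZModModule.add_self, zero_add, Set.pair_comm]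

theorem gpk_recovers_balanced_values_general {n m : ℕ}
    (f : (Fin n → ZMod 2) → (Fin m → ZMod 2))
    (f₁ f₂ : Fin m → ZMod 2) (hne : f₁ ≠ f₂)
    (hval : ∀ x, f x = f₁ ∨ f x = f₂)
    (hcard₁ :
      (Finset.univ.filter (fun x : Fin n → ZMod 2 => f x = f₁)).card = 2 ^ (n - 1))
    (hcard₂ :
      (Finset.univ.filter (fun x : Fin n → ZMod 2 => f x = f₂)).card = 2 ^ (n - 1))
    (lam : Fin m → ZMod 2)
    (hlam : ∀ i : Fin m, lam i =
      if (∑ x : Fin n → ZMod 2, sgn (dotp (f x) (stdBasis i))) = 0 then 1 else 0) :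
    lam = f₁ + f₂ ∧
      ({f₁, f₂} : Set (Fin m → ZMod 2)) =
        {f (fun _ => 0), f (fun _ => 0) + lam} := by
  have hlam_eq : lam = f₁ + f₂ := by
    funext i
    have hsum_zero_iff : (∑ x, sgn (dotp (f x) (stdBasis i))) = 0 ↔ f₁ i + f₂ i = 1 := by
      rw [Fintype.sum_comp_eq_of_two_valued f (fun v => sgn (dotp v (stdBasis i))) hne hval,
        hcard₁, hcard₂, ← smul_add, smul_eq_zero_iff_right (pow_ne_zero _ two_ne_zero),
        dotp_stdBasis, dotp_stdBasis, sgn_add_sgn_eq_zero_iff]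
    simp only [hlam i, hsum_zero_iff, ZMod.two_ite_eq_one, Pi.add_apply]
  exact ⟨hlam_eq, hlam_eq ▸ Set.pair_eq_pair_add_add (hval _)⟩

/-- Corollary 3.6: recovering the values of a balanced function.  If `f` is
balanced between `f₁ ≠ f₂`, and `λ ∈ 𝔽₂ᵐ` is defined by `λᵢ = 1` exactly when
`Σ_x (−1)^(f(x)·e_i) = 0`, then `λ = f₁ ⊕ f₂`, and the two values of `f` are
`f(0)` and `f(0) ⊕ λ`. -/
theorem gpk_recovers_balanced_values {n m : ℕ} (hn : 1 ≤ n)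
    (f : (Fin n → ZMod 2) → (Fin m → ZMod 2))
    (f₁ f₂ : Fin m → ZMod 2) (hne : f₁ ≠ f₂)
    (hval : ∀ x, f x = f₁ ∨ f x = f₂)
    (hcard₁ :
      (Finset.univ.filter (fun x : Fin n → ZMod 2 => f x = f₁)).card = 2 ^ (n - 1))
    (hcard₂ :
      (Finset.univ.filter (fun x : Fin n → ZMod 2 => f x = f₂)).card = 2 ^ (n - 1))
    (lam : Fin m → ZMod 2)
    (hlam : ∀ i : Fin m, lam i =
      if (∑ x : Fin n → ZMod 2, sgn (dotp (f x) (stdBasis i))) = 0 then 1 else 0) :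
    lam = f₁ + f₂ ∧
      ({f₁, f₂} : Set (Fin m → ZMod 2)) =
        {f (fun _ => 0), f (fun _ => 0) + lam} :=
  gpk_recovers_balanced_values_general f f₁ f₂ hne hval hcard₁ hcard₂ lam hlam
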